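/- Let 2m < n and G⁺_{2m}(x,y) = |x-y|^{-(n-2m)} - |x*-y|^{-(n-2m)} for x,y ∈ ℝⁿ₊, x ≠ y, where x* is the reflection across ∂ℝⁿ₊. For λ < 0, let Σ_λ = {x ∈ ℝⁿ₊ : x₁ < λ} and x^λ = (2λ-x₁, x₂,…,x_n). Then for all x, y ∈ Σ_λ with x ≠ y, G⁺_{2m}(x,y) - G⁺_{2m}(x^λ, y) > 0. -/

import Mathlib

/-!
Reflecting `x` in the hyperplane `x₁ = λ` changes only the first coordinate, so it raises both
squared distances `A = |x - y|²` and `B = |x* - y|² = A + 4 xₙ yₙ` by the same amount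
`t = 4 (λ - x₁)(λ - y₁) > 0`. With `φ u = u ^ (-(n - 2m)/2)` the claim becomes
`φ A - φ B > φ (A + t) - φ (B + t)` for `0 < A < B`, which holds because `u ↦ φ u - φ (u + t)` is
strictly decreasing: its derivative is `φ' u - φ' (u + t) < 0`, `φ'` being negative and increasing.
-/

noncomputable section

/-- The last coordinate of a point in `ℝⁿ`. -/
def lastCoord (n : ℕ) (x : EuclideanSpace ℝ (Fin n)) : ℝ :=
  if h : 0 < n then x ⟨n - 1, by omega⟩ else 0

/-- The upper half space `ℝⁿ₊ = {x : xₙ > 0}`. -/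
def upperHalf (n : ℕ) : Set (EuclideanSpace ℝ (Fin n)) := {x | 0 < lastCoord n x}

/-- Reflection `x*` of `x` across `∂ℝⁿ₊` (the last coordinate is negated). -/
def reflLast (n : ℕ) (x : EuclideanSpace ℝ (Fin n)) : EuclideanSpace ℝ (Fin n) :=
  WithLp.toLp 2 fun i : Fin n => if (i : ℕ) = n - 1 then -x i else x i

/-- The Green's function `G⁺₂ₘ` of `(-Δ)^m` on the half space. -/
def G2m (n m : ℕ) (x y : EuclideanSpace ℝ (Fin n)) : ℝ :=
  ‖x - y‖ ^ (-((n : ℝ) - 2 * m)) - ‖reflLast n x - y‖ ^ (-((n : ℝ) - 2 * m))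

/-- Reflection `x^λ = (2λ - x₁, x₂, …, xₙ)` about the hyperplane `x₁ = λ`. -/
def reflHyper (n : ℕ) (l : ℝ) (x : EuclideanSpace ℝ (Fin n)) :
    EuclideanSpace ℝ (Fin n) :=
  WithLp.toLp 2 fun i : Fin n => if (i : ℕ) = 0 then 2 * l - x i else x i

lemma Real.strictAntiOn_rpow_sub_rpow_add {c t : ℝ} (hc : c < 0) (ht : 0 < t) :
    StrictAntiOn (fun u : ℝ => u ^ c - (u + t) ^ c) (Set.Ioi 0) := by
  have hderiv : ∀ u ∈ Set.Ioi (0 : ℝ), HasDerivAt (fun u : ℝ => u ^ c - (u + t) ^ c)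
      (c * u ^ (c - 1) - c * (u + t) ^ (c - 1)) u := by
    intro u (hu : 0 < u)
    have hshift : HasDerivAt (fun u : ℝ => (u + t) ^ c) (c * (u + t) ^ (c - 1)) u := by
      simpa using ((hasDerivAt_id u).add_const t).rpow_const (p := c) (Or.inl (by positivity))
    exact (Real.hasDerivAt_rpow_const (Or.inl hu.ne')).sub hshift
  refine strictAntiOn_of_hasDerivWithinAt_neg (convex_Ioi 0)
    (fun u hu => (hderiv u hu).continuousAt.continuousWithinAt)
    (fun u hu => (hderiv u (interior_subset hu)).hasDerivWithinAt) fun u hu => ?_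
  rw [interior_Ioi] at hu
  have hlt : (u + t) ^ (c - 1) < u ^ (c - 1) :=
    Real.rpow_lt_rpow_of_neg hu (by linarith) (by linarith)
  nlinarith

lemma EuclideanSpace.norm_sub_sq_of_forall_ne {ι : Type*} [Fintype ι]
    {x x' : EuclideanSpace ℝ ι} (y : EuclideanSpace ℝ ι) (i : ι) (h : ∀ j ≠ i, x' j = x j) :
    ‖x' - y‖ ^ 2 = ‖x - y‖ ^ 2 + ((x' i - y i) ^ 2 - (x i - y i) ^ 2) := by
  simp only [EuclideanSpace.real_norm_sq_eq, PiLp.sub_apply]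
  rw [← sub_eq_iff_eq_add', ← Finset.sum_sub_distrib, Finset.sum_eq_single i]
  · intro j _ hj
    rw [h j hj, sub_self]
  · simp

lemma lastCoord_eq {n : ℕ} (hn : 0 < n) (x : EuclideanSpace ℝ (Fin n)) :
    lastCoord n x = x ⟨n - 1, by omega⟩ :=
  dif_pos hn

lemma norm_reflLast_sub_sq (n : ℕ) (x y : EuclideanSpace ℝ (Fin n)) :
    ‖reflLast n x - y‖ ^ 2 = ‖x - y‖ ^ 2 + 4 * lastCoord n x * lastCoord n y := by
  rcases Nat.eq_zero_or_pos n with rfl | hn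
  · simp [lastCoord, Subsingleton.elim (reflLast 0 x) x]
  rw [EuclideanSpace.norm_sub_sq_of_forall_ne y ⟨n - 1, by omega⟩, lastCoord_eq hn, lastCoord_eq hn]
  · simp only [reflLast, ↓reduceIte]
    ring
  · intro j hj
    simp [reflLast, Fin.ext_iff.not.mp hj]

lemma norm_reflHyper_sub_sq {n : ℕ} (hn : 0 < n) (l : ℝ) (x y : EuclideanSpace ℝ (Fin n)) :
    ‖reflHyper n l x - y‖ ^ 2 =
      ‖x - y‖ ^ 2 + 4 * (l - x ⟨0, hn⟩) * (l - y ⟨0, hn⟩) := by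
  rw [EuclideanSpace.norm_sub_sq_of_forall_ne y ⟨0, hn⟩]
  · simp only [reflHyper, ↓reduceIte]
    ring
  · intro j hj
    simp [reflHyper, Fin.ext_iff.not.mp hj]

lemma lastCoord_reflHyper {n : ℕ} (hn : n ≠ 1) (l : ℝ) (x : EuclideanSpace ℝ (Fin n)) :
    lastCoord n (reflHyper n l x) = lastCoord n x := by
  unfold lastCoord
  split_ifs with h
  · simp only [reflHyper, ite_eq_right_iff]
    omega
  · rfl

lemma G2m_eq_rpow_sq_norm (n m : ℕ) (x y : EuclideanSpace ℝ (Fin n)) :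
    G2m n m x y = (‖x - y‖ ^ 2) ^ (-((n : ℝ) - 2 * m) / 2)
      - (‖reflLast n x - y‖ ^ 2) ^ (-((n : ℝ) - 2 * m) / 2) := by
  simp only [G2m, Real.rpow_div_two_eq_sqrt _ (sq_nonneg _), Real.sqrt_sq (norm_nonneg _)]

/-- Strict monotonicity of `G⁺₂ₘ` under reflection: for `x, y` in
`Σ_λ = {x ∈ ℝⁿ₊ : x₁ < λ}` with `λ < 0`, `G⁺₂ₘ(x,y) - G⁺₂ₘ(x^λ,y) > 0`. -/
theorem G2m_refl_monotone (n m : ℕ) (hn : 2 ≤ n) (hm : 2 * m < n) (l : ℝ)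
    (x y : EuclideanSpace ℝ (Fin n))
    (hx : x ∈ upperHalf n) (hy : y ∈ upperHalf n)
    (hx1 : x ⟨0, by omega⟩ < l) (hy1 : y ⟨0, by omega⟩ < l) (hxy : x ≠ y) :
    0 < G2m n m x y - G2m n m (reflHyper n l x) y := by
  have hc : -((n : ℝ) - 2 * m) / 2 < 0 := by
    have : (2 * m : ℝ) < n := by exact_mod_cast hm
    linarith
  set A := ‖x - y‖ ^ 2
  set B := ‖reflLast n x - y‖ ^ 2
  set t := 4 * (l - x ⟨0, by omega⟩) * (l - y ⟨0, by omega⟩)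
  have hA : 0 < A := pow_pos (norm_pos_iff.2 (sub_ne_zero.2 hxy)) 2
  have hB : B = A + 4 * lastCoord n x * lastCoord n y := norm_reflLast_sub_sq n x y
  have hAB : A < B := by
    rw [hB]
    linarith [mul_pos hx.out hy.out]
  have ht : 0 < t := mul_pos (mul_pos four_pos (sub_pos.2 hx1)) (sub_pos.2 hy1)
  have hC : ‖reflHyper n l x - y‖ ^ 2 = A + t := norm_reflHyper_sub_sq _ l x y
  have hD : ‖reflLast n (reflHyper n l x) - y‖ ^ 2 = B + t := by
    rw [norm_reflLast_sub_sq, hC, lastCoord_reflHyper (by omega), hB]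
    ring
  have key := Real.strictAntiOn_rpow_sub_rpow_add hc ht hA (hA.trans hAB) hAB
  rw [G2m_eq_rpow_sq_norm, G2m_eq_rpow_sq_norm, hC, hD]
  linarith
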